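/- arXiv:2405.05002 — 2 statements merged into one kernel-verified Lean document; each statement's English description precedes it below -/
import Mathlib

section
/- The map a(μ) = μ + √(μ+1)·√(μ-1), restricted to ℂ \ [-1,1], is a bijection onto {z ∈ ℂ : |z| > 1}, with holomorphic inverse given by z ↦ (z + 1/z)/2. -/
noncomputable def csqrt (z : ℂ) : ℂ := z ^ (1/2 : ℂ)

noncomputable def amap (μ : ℂ) : ℂ := μ + csqrt (μ + 1) * csqrt (μ - 1)

def seg : Set ℂ := {z : ℂ | ∃ x : ℝ, -1 ≤ x ∧ x ≤ 1 ∧ z = (x : ℂ)}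

noncomputable def joukowski (z : ℂ) : ℂ := (z + 1 / z) / 2

/-!
Write `p = √(μ+1)` and `q = √(μ-1)`, so that `p² - q² = 2`. Then `a(μ) = (p+q)²/2` and
`μ - pq = (p-q)²/2` have product `1`, which gives `J(a(μ)) = μ` for the Joukowski map `J`.
Both principal roots lie in the closed right half-plane, on the same side of the real axis, so
`‖p - q‖ ≤ ‖p + q‖` and hence `‖a(μ)‖ ≥ 1`; equality would put `μ = J(a(μ))` in
`J(unit circle) = [-1,1]`. Conversely `J z = J w` forces `z = w` or `z w = 1`, which rules out
both a second preimage in `{|z| > 1}` and a value of `J` on `{|z| > 1}` lying in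
`[-1,1] = J(unit circle)`.
-/

open Complex ComplexConjugate

lemma csqrt_eq_cpow_inv_two (w : ℂ) : csqrt w = w ^ (2⁻¹ : ℂ) := by
  rw [csqrt, one_div]

lemma csqrt_sq (w : ℂ) : csqrt w ^ 2 = w := by
  rw [csqrt_eq_cpow_inv_two]
  exact_mod_cast cpow_nat_inv_pow w two_ne_zero

lemma csqrt_re_nonneg (w : ℂ) : 0 ≤ (csqrt w).re := by
  rw [csqrt_eq_cpow_inv_two, cpow_inv_two_re]
  exact Real.sqrt_nonneg _

lemma csqrt_im_nonneg {w : ℂ} (h : 0 ≤ w.im) : 0 ≤ (csqrt w).im := by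
  rw [csqrt_eq_cpow_inv_two, cpow_inv_two_im_eq_sqrt h]
  exact Real.sqrt_nonneg _

lemma csqrt_im_nonpos {w : ℂ} (h : w.im < 0) : (csqrt w).im ≤ 0 := by
  rw [csqrt_eq_cpow_inv_two, cpow_inv_two_im_eq_neg_sqrt h, neg_nonpos]
  exact Real.sqrt_nonneg _

lemma re_csqrt_mul_conj_csqrt_nonneg {v w : ℂ} (h : 0 ≤ v.im ↔ 0 ≤ w.im) :
    0 ≤ (csqrt v * conj (csqrt w)).re := by
  have hre := mul_nonneg (csqrt_re_nonneg v) (csqrt_re_nonneg w)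
  simp only [mul_re, conj_re, conj_im, mul_neg, sub_neg_eq_add]
  rcases le_or_gt 0 v.im with hv | hv
  · nlinarith [csqrt_im_nonneg hv, csqrt_im_nonneg (h.1 hv)]
  · nlinarith [csqrt_im_nonpos hv, csqrt_im_nonpos (not_le.1 (mt h.2 hv.not_ge))]

lemma norm_sub_le_norm_add_of_re_mul_conj_nonneg {p q : ℂ} (h : 0 ≤ (p * conj q).re) :
    ‖p - q‖ ≤ ‖p + q‖ := by
  rw [← sq_le_sq₀ (norm_nonneg _) (norm_nonneg _), ← normSq_eq_norm_sq, ← normSq_eq_norm_sq,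
    normSq_add, normSq_sub]
  linarith

lemma amap_mul_sub (μ : ℂ) : amap μ * (μ - csqrt (μ + 1) * csqrt (μ - 1)) = 1 := by
  unfold amap
  linear_combination (-csqrt (μ - 1) ^ 2) * csqrt_sq (μ + 1) - (μ + 1) * csqrt_sq (μ - 1)

lemma joukowski_amap (μ : ℂ) : joukowski (amap μ) = μ := by
  have hinv : 1 / amap μ = μ - csqrt (μ + 1) * csqrt (μ - 1) :=
    (eq_one_div_of_mul_eq_one_right (amap_mul_sub μ)).symm
  rw [joukowski, hinv, amap]
  ring

lemma norm_sub_le_norm_amap (μ : ℂ) : ‖μ - csqrt (μ + 1) * csqrt (μ - 1)‖ ≤ ‖amap μ‖ := by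
  set p := csqrt (μ + 1)
  set q := csqrt (μ - 1)
  have hμ : μ = (p ^ 2 + q ^ 2) / 2 := by
    linear_combination (-csqrt_sq (μ + 1) - csqrt_sq (μ - 1)) / 2
  have hsub : μ - p * q = (p - q) ^ 2 / 2 := by linear_combination hμ
  have hadd : amap μ = (p + q) ^ 2 / 2 := by rw [amap]; linear_combination hμ
  rw [hsub, hadd, norm_div, norm_div, norm_pow, norm_pow]
  gcongr
  exact norm_sub_le_norm_add_of_re_mul_conj_nonneg (re_csqrt_mul_conj_csqrt_nonneg (by simp))

lemma one_le_norm_amap (μ : ℂ) : 1 ≤ ‖amap μ‖ := by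
  have hprod : ‖amap μ‖ * ‖μ - csqrt (μ + 1) * csqrt (μ - 1)‖ = 1 := by
    rw [← norm_mul, amap_mul_sub, norm_one]
  nlinarith [norm_sub_le_norm_amap μ, norm_nonneg (amap μ)]

lemma joukowski_of_norm_eq_one {z : ℂ} (hz : ‖z‖ = 1) : joukowski z = z.re := by
  have hns : normSq z = 1 := by rw [normSq_eq_norm_sq, hz, one_pow]
  rw [joukowski, one_div, inv_def, hns, inv_one, ofReal_one, mul_one, add_conj]
  push_cast
  ring

lemma joukowski_image_sphere : joukowski '' Metric.sphere 0 1 = seg := by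
  ext μ
  constructor
  · rintro ⟨z, hz, rfl⟩
    rw [mem_sphere_zero_iff_norm] at hz
    obtain ⟨hlo, hhi⟩ := abs_le.1 (hz ▸ abs_re_le_norm z)
    exact ⟨z.re, hlo, hhi, joukowski_of_norm_eq_one hz⟩
  · rintro ⟨x, hlo, hhi, rfl⟩
    refine ⟨exp (Real.arccos x * I), by simp [norm_exp_ofReal_mul_I], ?_⟩
    rw [joukowski_of_norm_eq_one (norm_exp_ofReal_mul_I _), exp_ofReal_mul_I_re,
      Real.cos_arccos hlo hhi]

lemma eq_or_mul_eq_one_of_joukowski_eq {z w : ℂ} (hz : z ≠ 0) (hw : w ≠ 0)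
    (h : joukowski z = joukowski w) : z = w ∨ z * w = 1 := by
  rw [joukowski, joukowski] at h
  have hfac : (z - w) * (z * w - 1) = 0 := by
    field_simp at h
    linear_combination h
  exact (mul_eq_zero.1 hfac).imp sub_eq_zero.1 sub_eq_zero.1

lemma ne_zero_of_one_lt_norm {z : ℂ} (hz : 1 < ‖z‖) : z ≠ 0 :=
  norm_pos_iff.1 (one_pos.trans hz)

lemma one_lt_norm_amap {μ : ℂ} (hμ : μ ∉ seg) : 1 < ‖amap μ‖ := by
  refine (one_le_norm_amap μ).lt_of_ne fun h => hμ ?_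
  rw [← joukowski_amap μ, ← joukowski_image_sphere]
  exact Set.mem_image_of_mem _ (mem_sphere_zero_iff_norm.2 h.symm)

lemma joukowski_notMem_seg {z : ℂ} (hz : 1 < ‖z‖) : joukowski z ∉ seg := by
  rw [← joukowski_image_sphere]
  rintro ⟨w, hw, hwz⟩
  rw [mem_sphere_zero_iff_norm] at hw
  have hw0 : w ≠ 0 := norm_ne_zero_iff.1 (by rw [hw]; exact one_ne_zero)
  rcases eq_or_mul_eq_one_of_joukowski_eq hw0 (ne_zero_of_one_lt_norm hz) hwz with rfl | hmul
  · exact hz.ne' hw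
  · have := congrArg norm hmul
    rw [norm_mul, hw, one_mul, norm_one] at this
    exact hz.ne' this

lemma injOn_joukowski : Set.InjOn joukowski {z : ℂ | 1 < ‖z‖} := by
  intro z (hz : 1 < ‖z‖) w (hw : 1 < ‖w‖) h
  refine (eq_or_mul_eq_one_of_joukowski_eq (ne_zero_of_one_lt_norm hz)
    (ne_zero_of_one_lt_norm hw) h).resolve_right fun hmul => ?_
  have := congrArg norm hmul
  rw [norm_mul, norm_one] at this
  nlinarith

lemma differentiableOn_joukowski : DifferentiableOn ℂ joukowski {0}ᶜ := by
  unfold joukowski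
  fun_prop (disch := simp)

theorem stmt0 :
    Set.BijOn amap segᶜ {z : ℂ | 1 < ‖z‖} ∧
    Set.InvOn joukowski amap segᶜ {z : ℂ | 1 < ‖z‖} ∧
    DifferentiableOn ℂ joukowski {z : ℂ | 1 < ‖z‖} := by
  have hmaps : Set.MapsTo amap segᶜ {z : ℂ | 1 < ‖z‖} := fun _ => one_lt_norm_amap
  have hmaps' : Set.MapsTo joukowski {z : ℂ | 1 < ‖z‖} segᶜ := fun _ => joukowski_notMem_seg
  have hinv : Set.InvOn joukowski amap segᶜ {z : ℂ | 1 < ‖z‖} :=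
    ⟨fun μ _ => joukowski_amap μ, fun z hz =>
      injOn_joukowski (hmaps (hmaps' hz)) hz (joukowski_amap (joukowski z))⟩
  exact ⟨hinv.bijOn hmaps hmaps', hinv,
    differentiableOn_joukowski.mono fun _ => ne_zero_of_one_lt_norm⟩
end

section
/- Let P ∈ ℝ^{2N×2N} be the anti-diagonal involution P_{ij} = δ_{i, 2N+1−j}, and let C^γ be the gauge capacitance matrix. Then P·C^γ·P = C^γ. Moreover, for the generalized gauge capacitance matrix 𝒞 = V^θ·C^γ with V^θ = diag(e^{iθ}·I_N, e^{−iθ}·I_N), one has P·𝒞·P equal to the entrywise complex conjugate of 𝒞. -/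
def gaugeC (N : ℕ) (α β η : ℝ) : Matrix (Fin (2 * N)) (Fin (2 * N)) ℝ :=
  Matrix.of fun i j =>
    if (i : ℕ) = (j : ℕ) then (if (i : ℕ) = 0 ∨ (i : ℕ) = 2 * N - 1 then α + β else α)
    else if (i : ℕ) = (j : ℕ) + 1 then (if (i : ℕ) < N then β else η)
    else if (j : ℕ) = (i : ℕ) + 1 then (if (i : ℕ) < N then η else β)
    else 0

def revP (N : ℕ) : Matrix (Fin (2 * N)) (Fin (2 * N)) ℝ :=
  Matrix.of fun i j => if (i : ℕ) + (j : ℕ) = 2 * N - 1 then 1 else 0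

noncomputable def Vmat (N : ℕ) (θ : ℝ) : Matrix (Fin (2 * N)) (Fin (2 * N)) ℂ :=
  Matrix.diagonal fun i =>
    if (i : ℕ) < N then Complex.exp ((θ : ℂ) * Complex.I)
    else Complex.exp (-(θ : ℂ) * Complex.I)

lemma revP_entry (N : ℕ) (i j : Fin (2 * N)) :
    revP N i j = if j = i.rev then 1 else 0 := by
  have hi := i.isLt
  rw [revP, Matrix.of_apply]
  congr 1
  simp only [eq_iff_iff, Fin.ext_iff, Fin.val_rev]
  omega

lemma E_mul {R : Type*} [NonAssocSemiring R] {n : ℕ} (E M : Matrix (Fin n) (Fin n) R)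
    (hE : ∀ i j, E i j = if j = i.rev then 1 else 0) (i j : Fin n) :
    (E * M) i j = M i.rev j := by
  simp [Matrix.mul_apply, hE, ite_mul, Finset.sum_ite_eq']

lemma mul_E {R : Type*} [NonAssocSemiring R] {n : ℕ} (E M : Matrix (Fin n) (Fin n) R)
    (hE : ∀ i j, E i j = if j = i.rev then 1 else 0) (i j : Fin n) :
    (M * E) i j = M i j.rev := by
  have h : ∀ k : Fin n, (j = k.rev) = (k = j.rev) := by
    intro k; rw [eq_iff_iff]
    constructor <;> (intro h; subst h; simp [Fin.rev_rev])
  simp [Matrix.mul_apply, hE, h, mul_ite, Finset.sum_ite_eq]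

lemma gaugeC_rev (N : ℕ) (α β η : ℝ) (i j : Fin (2 * N)) :
    gaugeC N α β η i.rev j.rev = gaugeC N α β η i j := by
  have hi := i.isLt; have hj := j.isLt
  simp only [gaugeC, Matrix.of_apply, Fin.val_rev]
  split_ifs <;> first | rfl | omega | (exfalso; omega)

theorem stmt17 (γ θ : ℝ) (hγ : 0 < γ) (N : ℕ) (α β η : ℝ)
    (hα : α = γ * Real.cosh (γ / 2) / Real.sinh (γ / 2))
    (hβ : β = γ / (1 - Real.exp γ))
    (hη : η = -γ / (1 - Real.exp (-γ))) :
    revP N * gaugeC N α β η * revP N = gaugeC N α β η ∧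
    (revP N).map (Complex.ofReal) *
        (Vmat N θ * (gaugeC N α β η).map (Complex.ofReal)) *
        (revP N).map (Complex.ofReal) =
      (Vmat N θ * (gaugeC N α β η).map (Complex.ofReal)).map (starRingEnd ℂ) := by
  have hE : ∀ i j, revP N i j = if j = i.rev then 1 else 0 := revP_entry N
  have hE' : ∀ i j, (revP N).map (Complex.ofReal) i j = if j = i.rev then 1 else 0 := by
    intro i j
    simp [Matrix.map_apply, revP_entry, apply_ite Complex.ofReal]
  constructor
  · ext i j
    rw [mul_E _ _ hE, E_mul _ _ hE, gaugeC_rev]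
  · ext i j
    rw [mul_E _ _ hE', E_mul _ _ hE', Matrix.map_apply]
    rw [Vmat, Matrix.diagonal_mul, Matrix.diagonal_mul]
    rw [map_mul, Matrix.map_apply, Matrix.map_apply, gaugeC_rev, Complex.conj_ofReal]
    congr 1
    have hi := i.isLt
    have hrev : ((i.rev : Fin (2 * N)) : ℕ) < N ↔ ¬ ((i : ℕ) < N) := by
      rw [Fin.val_rev]; omega
    by_cases h : (i : ℕ) < N
    · rw [if_neg (by rw [hrev]; exact fun h' => h' h), if_pos h, ← Complex.exp_conj]
      congr 1
      simp [Complex.conj_ofReal]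
    · rw [if_pos (hrev.mpr h), if_neg h, ← Complex.exp_conj]
      congr 1
      simp [Complex.conj_ofReal]
end
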